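/- arXiv:2603.01290 — 3 statements merged into one kernel-verified Lean document; each statement's English description precedes it below -/
import Mathlib

section
/- Let σ > 0 and μ₁ < μ₂ be real numbers. For every Borel-measurable set A ⊆ ℝ, the total error of the decision rule that declares N(μ₁, σ²) on A, namely N(μ₁, σ²)(Aᶜ) + N(μ₂, σ²)(A), is at least 2·Φ((μ₁ − μ₂)/(2σ)). In particular, no measurable decision rule distinguishing the two equal-variance Gaussians achieves total error smaller than that of the midpoint threshold test. -/
/-!
Below the midpoint `(μ₁ + μ₂)/2` the density of `N(μ₁, σ²)` dominates that of `N(μ₂, σ²)`, above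
it the reverse holds. For a region `T` with this property no decision region beats `T`
(Neyman–Pearson): moving part of the region across the boundary of `T` trades mass of one measure
for at least as much mass of the other. Standardizing, the error of the midpoint test is
`2Φ((μ₁ - μ₂)/(2σ))`.
-/

open MeasureTheory ProbabilityTheory Set
open scoped NNReal ENNReal

/-- The standard normal cumulative distribution function `Φ`. -/
noncomputable def stdNormalCDF (t : ℝ) : ℝ :=
    (gaussianReal 0 1 (Iic t)).toReal

theorem MeasureTheory.measure_compl_add_measure_le_of_le_on
    {α : Type*} [MeasurableSpace α] (P Q : Measure α) {T : Set α} (hT : MeasurableSet T)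
    (hQP : ∀ s ⊆ T, Q s ≤ P s) (hPQ : ∀ s ⊆ Tᶜ, P s ≤ Q s) (A : Set α) :
    P Tᶜ + Q T ≤ P Aᶜ + Q A := by
  have hP : P Tᶜ ≤ Q (A \ T) + P (Aᶜ \ T) :=
    calc P Tᶜ = P (A \ T ∪ Aᶜ \ T) := by
          rw [← union_sdiff_distrib, union_compl_self, ← compl_eq_univ_sdiff]
      _ ≤ P (A \ T) + P (Aᶜ \ T) := measure_union_le _ _
      _ ≤ Q (A \ T) + P (Aᶜ \ T) := add_le_add (hPQ _ (sdiff_subset_compl _ _)) le_rfl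
  have hQ : Q T ≤ Q (A ∩ T) + P (Aᶜ ∩ T) :=
    calc Q T = Q (A ∩ T ∪ Aᶜ ∩ T) := by
          rw [← union_inter_distrib_right, union_compl_self, univ_inter]
      _ ≤ Q (A ∩ T) + Q (Aᶜ ∩ T) := measure_union_le _ _
      _ ≤ Q (A ∩ T) + P (Aᶜ ∩ T) := add_le_add le_rfl (hQP _ inter_subset_right)
  calc P Tᶜ + Q T ≤ (Q (A \ T) + P (Aᶜ \ T)) + (Q (A ∩ T) + P (Aᶜ ∩ T)) := add_le_add hP hQ
    _ = (P (Aᶜ ∩ T) + P (Aᶜ \ T)) + (Q (A ∩ T) + Q (A \ T)) := by ac_rfl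
    _ = P Aᶜ + Q A := by rw [measure_inter_add_sdiff _ hT, measure_inter_add_sdiff _ hT]

namespace ProbabilityTheory

variable {μ μ' : ℝ} {v : ℝ≥0}

lemma gaussianPDF_le_of_abs_sub_le {x : ℝ} (h : |x - μ| ≤ |x - μ'|) :
    gaussianPDF μ' v x ≤ gaussianPDF μ v x := by
  have hsq : (x - μ) ^ 2 ≤ (x - μ') ^ 2 := sq_le_sq.2 h
  unfold gaussianPDF gaussianPDFReal
  gcongr

lemma gaussianReal_le_of_abs_sub_le (hv : v ≠ 0) {s : Set ℝ}
    (h : ∀ x ∈ s, |x - μ| ≤ |x - μ'|) :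
    gaussianReal μ' v s ≤ gaussianReal μ v s := by
  rw [gaussianReal_apply _ hv, gaussianReal_apply _ hv]
  exact setLIntegral_mono (measurable_gaussianPDF _ _) fun x hx ↦
    gaussianPDF_le_of_abs_sub_le (h x hx)

lemma gaussianReal_map_standardize {σ : ℝ} (hσ : 0 < σ) :
    (gaussianReal μ (σ.toNNReal ^ 2)).map (fun x ↦ (x - μ) / σ) = gaussianReal 0 1 := by
  have hcomp : (fun x ↦ (x - μ) / σ) = (· / σ) ∘ (· - μ) := rfl
  rw [hcomp, ← Measure.map_map (by fun_prop) (by fun_prop), gaussianReal_map_sub_const,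
    gaussianReal_map_div_const, sub_self, zero_div]
  congr
  ext
  simp [hσ.le, hσ.ne']

lemma toReal_gaussianReal_Iic {σ : ℝ} (hσ : 0 < σ) (t : ℝ) :
    (gaussianReal μ (σ.toNNReal ^ 2) (Iic t)).toReal = stdNormalCDF ((t - μ) / σ) := by
  rw [stdNormalCDF, ← gaussianReal_map_standardize (μ := μ) hσ,
    Measure.map_apply (by fun_prop) measurableSet_Iic]
  congr
  ext x
  simp [div_le_div_iff_of_pos_right hσ]

lemma gaussianReal_Ici (t : ℝ) : gaussianReal μ v (Ici t) = gaussianReal (-μ) v (Iic (-t)) := by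
  rw [← gaussianReal_map_neg, Measure.map_apply measurable_neg measurableSet_Iic]
  simp

lemma toReal_gaussianReal_Ici {σ : ℝ} (hσ : 0 < σ) (t : ℝ) :
    (gaussianReal μ (σ.toNNReal ^ 2) (Ici t)).toReal = stdNormalCDF ((μ - t) / σ) := by
  rw [gaussianReal_Ici, toReal_gaussianReal_Iic hσ, neg_sub_neg]

end ProbabilityTheory

theorem no_rule_beats_midpoint_threshold_general (σ μ₁ μ₂ : ℝ) (hσ : 0 < σ)
    (hμ : μ₁ < μ₂) (A : Set ℝ) :
    2 * stdNormalCDF ((μ₁ - μ₂) / (2 * σ)) ≤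
      (gaussianReal μ₁ (σ.toNNReal ^ 2) Aᶜ).toReal +
      (gaussianReal μ₂ (σ.toNNReal ^ 2) A).toReal := by
  set v := σ.toNNReal ^ 2
  have hv : v ≠ 0 := by positivity
  set m := (μ₁ + μ₂) / 2 with hm
  have hcloser₁ : ∀ x < m, |x - μ₁| ≤ |x - μ₂| := fun x hx ↦ sq_le_sq.1 (by nlinarith)
  have hcloser₂ : ∀ x, m ≤ x → |x - μ₂| ≤ |x - μ₁| := fun x hx ↦ sq_le_sq.1 (by nlinarith)
  have hopt := measure_compl_add_measure_le_of_le_on (gaussianReal μ₁ v) (gaussianReal μ₂ v)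
    measurableSet_Iio
    (fun s hs ↦ gaussianReal_le_of_abs_sub_le hv fun x hx ↦ hcloser₁ x (hs hx))
    (fun s hs ↦ gaussianReal_le_of_abs_sub_le hv fun x hx ↦ hcloser₂ x (not_lt.1 (hs hx))) A
  rw [compl_Iio] at hopt
  have : NullSingletonClass (gaussianReal μ₂ v) := nullSingletonClass_gaussianReal hv
  have hlow : (gaussianReal μ₂ v (Iio m)).toReal = stdNormalCDF ((μ₁ - μ₂) / (2 * σ)) := by
    rw [measure_congr Iio_ae_eq_Iic, toReal_gaussianReal_Iic hσ, hm]
    congr 1; field_simp; ring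
  have hup : (gaussianReal μ₁ v (Ici m)).toReal = stdNormalCDF ((μ₁ - μ₂) / (2 * σ)) := by
    rw [toReal_gaussianReal_Ici hσ, hm]
    congr 1; field_simp; ring
  calc 2 * stdNormalCDF ((μ₁ - μ₂) / (2 * σ))
      = (gaussianReal μ₁ v (Ici m) + gaussianReal μ₂ v (Iio m)).toReal := by
        rw [ENNReal.toReal_add (by finiteness) (by finiteness), hlow, hup, two_mul]
    _ ≤ (gaussianReal μ₁ v Aᶜ + gaussianReal μ₂ v A).toReal :=
        ENNReal.toReal_mono (by finiteness) hopt
    _ = _ := ENNReal.toReal_add (by finiteness) (by finiteness)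

/-- For `σ > 0`, `μ₁ < μ₂`, and any Borel-measurable decision
region `A ⊆ ℝ` (on which the sample is declared to come from `N(μ₁, σ²)`), the
total error `N(μ₁, σ²)(Aᶜ) + N(μ₂, σ²)(A)` is at least
`2·Φ((μ₁ − μ₂)/(2σ))`: no measurable decision rule beats the midpoint
threshold test. -/
theorem no_rule_beats_midpoint_threshold (σ μ₁ μ₂ : ℝ) (hσ : 0 < σ)
    (hμ : μ₁ < μ₂) (A : Set ℝ) (hA : MeasurableSet A) :
    2 * stdNormalCDF ((μ₁ - μ₂) / (2 * σ)) ≤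
      (gaussianReal μ₁ (σ.toNNReal ^ 2) Aᶜ).toReal +
      (gaussianReal μ₂ (σ.toNNReal ^ 2) A).toReal :=
  no_rule_beats_midpoint_threshold_general σ μ₁ μ₂ hσ hμ A
end

section
/- For every threshold θ ∈ ℝ, the total error of the threshold test distinguishing the emission distribution N(2, 1.5²) of a rival in L_harvest with Active Aero from the emission distribution N(4, 1.5²) of a rival in ERS state H without Active Aero, namely N(4, 1.5²)({x : x ≤ θ}) + N(2, 1.5²)({x : x > θ}), is at least 1/2. Hence these two hypotheses cannot be reliably separated by any scalar threshold on Δv_trap. -/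
open MeasureTheory ProbabilityTheory Set
open scoped NNReal ENNReal

/-!
Shifting both laws to `ν = N(0, 1.5²)`, the total error at `θ` is
`ν(-∞, θ - 4] + ν(θ - 2, ∞) = 1 - ν(θ - 4, θ - 2]`. Since the density of `ν` is even and
decreasing on `[0, ∞)`, a window of length `2` carries the most mass when centred at `0`, and
`ν(-1, 1] = 2Φ(2/3) - 1 ≈ 0.495`. The last bound follows from `exp (-t) ≤ 1 - t + t²` and
`π > 3.14`.
-/

open Real intervalIntegral

theorem exp_neg_le_one_sub_add_sq {t : ℝ} (ht : 0 ≤ t) : exp (-t) ≤ 1 - t + t ^ 2 := by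
  have h : exp (-t) * (1 + t) ≤ 1 :=
    calc exp (-t) * (1 + t) ≤ exp (-t) * exp t := by gcongr; linarith [add_one_le_exp t]
      _ = 1 := by rw [← exp_add, neg_add_cancel, exp_zero]
  nlinarith [exp_pos (-t), pow_nonneg ht 3]

section EvenAntitoneOn

variable {p : ℝ → ℝ}

theorem apply_le_apply_of_abs_le (h_even : ∀ x, p (-x) = p x) (h_anti : AntitoneOn p (Ici 0))
    {x y : ℝ} (h : |y| ≤ |x|) : p x ≤ p y := by
  have h_abs : ∀ z, p |z| = p z := fun z => by
    rcases abs_choice z with hz | hz <;> rw [hz]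
    exact h_even z
  rw [← h_abs x, ← h_abs y]
  exact h_anti (abs_nonneg y) (abs_nonneg x) h

theorem integral_add_le_integral_centered_of_le (hp : ∀ a b, IntervalIntegrable p volume a b)
    (h_even : ∀ x, p (-x) = p x) (h_anti : AntitoneOn p (Ici 0)) {L a : ℝ} (hL : 0 ≤ L)
    (ha : a ≤ -(L / 2)) :
    ∫ x in a..a + L, p x ≤ ∫ x in -(L / 2)..L / 2, p x := by
  -- Both windows share `[-L/2, a + L]`; translated by `L`, the overhang `[a, -L/2]` lands on
  -- `[a + L, L/2]`, where every point is at least as close to `0`.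
  have h_left : ∫ x in a..-(L / 2), p x = ∫ x in a + L..L / 2, p (x - L) := by
    rw [integral_comp_sub_right]; ring_nf
  have h_shift : IntervalIntegrable (fun x => p (x - L)) volume (a + L) (L / 2) := by
    simpa [show -(L / 2) + L = L / 2 by ring] using (hp a (-(L / 2))).comp_sub_right L
  have h_mono : ∫ x in a + L..L / 2, p (x - L) ≤ ∫ x in a + L..L / 2, p x := by
    refine integral_mono_on (by linarith) h_shift (hp _ _) fun x hx => ?_
    refine apply_le_apply_of_abs_le h_even h_anti ?_
    rw [abs_sub_comm, abs_of_nonneg (show 0 ≤ L - x by linarith [hx.2])]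
    exact abs_le.mpr ⟨by linarith, by linarith [hx.2]⟩
  rw [← integral_add_adjacent_intervals (hp a (-(L / 2))) (hp _ (a + L)),
    ← integral_add_adjacent_intervals (hp (-(L / 2)) (a + L)) (hp _ (L / 2))]
  linarith

theorem integral_add_le_integral_centered (hp : ∀ a b, IntervalIntegrable p volume a b)
    (h_even : ∀ x, p (-x) = p x) (h_anti : AntitoneOn p (Ici 0)) {L : ℝ} (hL : 0 ≤ L) (a : ℝ) :
    ∫ x in a..a + L, p x ≤ ∫ x in -(L / 2)..L / 2, p x := by
  rcases le_total a (-(L / 2)) with ha | ha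
  · exact integral_add_le_integral_centered_of_le hp h_even h_anti hL ha
  · have h_reflect : ∫ x in a..a + L, p x = ∫ x in -(a + L)..-(a + L) + L, p x :=
      calc ∫ x in a..a + L, p x = ∫ x in a..a + L, p (-x) := by simp only [h_even]
        _ = ∫ x in -(a + L)..-(a + L) + L, p x := by
          rw [integral_comp_neg, show -(a + L) + L = -a by ring]
    rw [h_reflect]
    exact integral_add_le_integral_centered_of_le hp h_even h_anti hL (by linarith)

end EvenAntitoneOn

theorem gaussianPDFReal_zero_neg (v : ℝ≥0) (x : ℝ) :
    gaussianPDFReal 0 v (-x) = gaussianPDFReal 0 v x := by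
  simp [gaussianPDFReal]

theorem antitoneOn_gaussianPDFReal_zero (v : ℝ≥0) : AntitoneOn (gaussianPDFReal 0 v) (Ici 0) := by
  intro x hx y _ hxy
  simp only [gaussianPDFReal, sub_zero]
  gcongr

theorem gaussianReal_apply_Ioc (μ : ℝ) {v : ℝ≥0} (hv : v ≠ 0) {a b : ℝ} (hab : a ≤ b) :
    gaussianReal μ v (Ioc a b) = ENNReal.ofReal (∫ x in a..b, gaussianPDFReal μ v x) := by
  rw [gaussianReal_apply_eq_integral μ hv, integral_of_le hab]

theorem gaussianReal_apply_eq_preimage_add (μ : ℝ) (v : ℝ≥0) {s : Set ℝ} (hs : MeasurableSet s) :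
    gaussianReal μ v s = gaussianReal 0 v ((· + μ) ⁻¹' s) := by
  conv_lhs => rw [← zero_add μ, ← gaussianReal_map_add_const]
  exact Measure.map_apply (measurable_add_const μ) hs

theorem measure_Iic_add_measure_Ioi {μ : Measure ℝ} [IsProbabilityMeasure μ] {a b : ℝ}
    (hab : a ≤ b) : μ (Iic a) + μ (Ioi b) = 1 - μ (Ioc a b) := by
  rw [← prob_compl_eq_one_sub measurableSet_Ioc, compl_Ioc,
    measure_union (Iic_disjoint_Ioi hab) measurableSet_Ioi]

theorem integral_neg_one_one_gaussianPDFReal_le_half :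
    ∫ x in (-1 : ℝ)..1, gaussianPDFReal 0 ((3 / 2 : ℝ≥0) ^ 2) x ≤ 1 / 2 := by
  set c : ℝ := (√(2 * π * (9 / 4)))⁻¹
  have h_taylor : ∀ x : ℝ, gaussianPDFReal 0 ((3 / 2 : ℝ≥0) ^ 2) x ≤
      c * (1 - 2 / 9 * x ^ 2 + 4 / 81 * x ^ 4) := by
    intro x
    have h := exp_neg_le_one_sub_add_sq (t := 2 / 9 * x ^ 2) (by positivity)
    simp only [gaussianPDFReal, c]
    push_cast
    rw [show -(x - 0) ^ 2 / (2 * (3 / 2) ^ 2) = -(2 / 9 * x ^ 2) by ring,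
      show ((3 : ℝ) / 2) ^ 2 = 9 / 4 by norm_num]
    gcongr
    linarith
  have h_poly : ∫ x in (-1 : ℝ)..1, (1 - 2 / 9 * x ^ 2 + 4 / 81 * x ^ 4) = 758 / 405 := by
    rw [integral_eq_sub_of_hasDerivAt (f := fun x => x - 2 / 27 * x ^ 3 + 4 / 405 * x ^ 5)]
    · norm_num
    · intro x _
      refine (((hasDerivAt_id' x).sub ((hasDerivAt_pow 3 x).const_mul (2 / 27))).add
        ((hasDerivAt_pow 5 x).const_mul (4 / 405))).congr_deriv ?_
      push_cast
      ring
    · exact (by fun_prop : Continuous _).intervalIntegrable _ _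
  have h_sqrt : 1516 / 405 ≤ √(2 * π * (9 / 4)) := by
    rw [le_sqrt (by norm_num) (by positivity)]
    nlinarith [pi_gt_d2]
  calc ∫ x in (-1 : ℝ)..1, gaussianPDFReal 0 ((3 / 2 : ℝ≥0) ^ 2) x
      ≤ ∫ x in (-1 : ℝ)..1, c * (1 - 2 / 9 * x ^ 2 + 4 / 81 * x ^ 4) :=
        integral_mono_on (by norm_num) (integrable_gaussianPDFReal _ _).intervalIntegrable
          ((by fun_prop : Continuous _).intervalIntegrable _ _) fun x _ => h_taylor x
    _ = c * (758 / 405) := by rw [intervalIntegral.integral_const_mul, h_poly]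
    _ ≤ 1 / 2 := by
      rw [inv_mul_le_iff₀ (by positivity)]
      linarith

/-- For every threshold `θ`, the total error of the threshold test
distinguishing the emission distribution `N(2, 1.5²)` (rival in `L_harvest`
with Active Aero) from `N(4, 1.5²)` (rival in ERS state `H` without Active
Aero), namely `N(4, 1.5²)({x | x ≤ θ}) + N(2, 1.5²)({x | x > θ})`, is at least
`1/2`: these hypotheses cannot be reliably separated by any threshold on
`Δv_trap`. -/
theorem harvest_vs_high_total_error_ge_half (θ : ℝ) :
    (1 : ℝ≥0∞) / 2 ≤
      gaussianReal 4 ((3/2 : ℝ≥0)^2) {x : ℝ | x ≤ θ} +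
      gaussianReal 2 ((3/2 : ℝ≥0)^2) {x : ℝ | θ < x} := by
  set v : ℝ≥0 := (3 / 2) ^ 2
  have hv : v ≠ 0 := by norm_num [v]
  change 1 / 2 ≤ gaussianReal 4 v (Iic θ) + gaussianReal 2 v (Ioi θ)
  rw [gaussianReal_apply_eq_preimage_add 4 v measurableSet_Iic,
    gaussianReal_apply_eq_preimage_add 2 v measurableSet_Ioi, preimage_add_const_Iic,
    preimage_add_const_Ioi, measure_Iic_add_measure_Ioi (by linarith)]
  have h_window : gaussianReal 0 v (Ioc (θ - 4) (θ - 2)) ≤ 1 / 2 :=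
    calc gaussianReal 0 v (Ioc (θ - 4) (θ - 2))
        = ENNReal.ofReal (∫ x in θ - 4..θ - 4 + 2, gaussianPDFReal 0 v x) := by
          rw [gaussianReal_apply_Ioc 0 hv (by linarith), show θ - 4 + 2 = θ - 2 by ring]
      _ ≤ ENNReal.ofReal (∫ x in (-1 : ℝ)..1, gaussianPDFReal 0 v x) := by
          gcongr
          convert integral_add_le_integral_centered
            (fun a b => (integrable_gaussianPDFReal 0 v).intervalIntegrable)
            (gaussianPDFReal_zero_neg v) (antitoneOn_gaussianPDFReal_zero v) zero_le_two (θ - 4)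
            using 2 <;> norm_num
      _ ≤ 1 / 2 := by
          rw [← ENNReal.ofReal_one, ← ENNReal.ofReal_ofNat 2, ← ENNReal.ofReal_div_of_pos two_pos]
          exact ENNReal.ofReal_le_ofReal integral_neg_one_one_gaussianPDFReal_le_half
  refine ENNReal.le_sub_of_add_le_left (measure_ne_top _ _) ?_
  calc gaussianReal 0 v (Ioc (θ - 4) (θ - 2)) + 1 / 2 ≤ 1 / 2 + 1 / 2 := by gcongr
    _ = 1 := ENNReal.add_halves 1
end

section
/- Under the δ_throttle emission model with equal prior probabilities 1/2 on the two hypotheses L_harvest and L_derate, the posterior probability of L_harvest given the event {δ_throttle < 0.15} is at least 0.85. Explicitly, writing P_h for the Gaussian measure N(0.08, 0.05²) conditioned on [0,1] and P_d for the Gaussian measure N(0.55, 0.18²) conditioned on [0,1], one has P_h([0, 0.15)) / (P_h([0, 0.15)) + P_d([0, 0.15))) ≥ 0.85. -/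
/-!
Truncating to `[0,1]` multiplies a Gaussian measure by the inverse mass of `[0,1]`, which is at
least `1` for the harvest law and at most `25/12` for the derate law, since the derate density
exceeds `4/3` within one standard deviation of its mean. The harvest density exceeds `24/5` within
one standard deviation of its mean, so `P_h([0, 0.15)) ≥ 12/25`; the window `[0, 0.15)` lies at
least `20/9` standard deviations below the derate mean, where that density is below `2/9`, so
`P_d([0, 0.15)) ≤ (1/30)/(12/25)`. The posterior is then at least `(12/25)/(12/25 + 5/72) > 0.87`.
-/

open MeasureTheory ProbabilityTheory Set
open scoped NNReal ENNReal

/-- The truncated-Gaussian emission measure of `δ_throttle` under `L_harvest`: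
`N(0.08, 0.05²)` conditioned on `[0,1]`. -/
noncomputable def Pharvest : Measure ℝ :=
    (gaussianReal (2/25) ((1/20 : ℝ≥0)^2))[|Icc (0:ℝ) 1]

/-- The truncated-Gaussian emission measure of `δ_throttle` under `L_derate`:
`N(0.55, 0.18²)` conditioned on `[0,1]`. -/
noncomputable def Pderate : Measure ℝ :=
    (gaussianReal (11/20) ((9/50 : ℝ≥0)^2))[|Icc (0:ℝ) 1]

open Real

namespace ProbabilityTheory

variable {μ x y : ℝ} {v σ : ℝ≥0}

lemma gaussianPDFReal_le_of_abs_sub_le (h : |y - μ| ≤ |x - μ|) :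
    gaussianPDFReal μ v x ≤ gaussianPDFReal μ v y := by
  unfold gaussianPDFReal
  refine mul_le_mul_of_nonneg_left (exp_le_exp.mpr ?_) (by positivity)
  exact div_le_div_of_nonneg_right (neg_le_neg (sq_le_sq.mpr h)) (by positivity)

lemma gaussianPDFReal_sq_eq (μ : ℝ) (σ : ℝ≥0) (x : ℝ) :
    gaussianPDFReal μ (σ ^ 2) x = σ⁻¹ * gaussianPDFReal 0 1 ((x - μ) / σ) := by
  have hexp : -((x - μ) / σ) ^ 2 / 2 = -(x - μ) ^ 2 / (2 * σ ^ 2) := by ring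
  simp only [gaussianPDFReal, NNReal.coe_pow, NNReal.coe_one, mul_one, sub_zero, hexp]
  rw [Real.sqrt_mul (by positivity), Real.sqrt_sq σ.coe_nonneg, mul_inv]
  push_cast
  ring

lemma inv_mul_gaussianPDFReal_le {k : ℝ} (h : |x - μ| ≤ k * σ) :
    σ⁻¹ * gaussianPDFReal 0 1 k ≤ gaussianPDFReal μ (σ ^ 2) x := by
  rcases eq_or_ne σ 0 with rfl | hσ
  · simp
  have hσ' : (0 : ℝ) < σ := by positivity
  rw [gaussianPDFReal_sq_eq]
  gcongr
  apply gaussianPDFReal_le_of_abs_sub_le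
  rw [sub_zero, sub_zero, abs_div, NNReal.abs_eq, div_le_iff₀ hσ']
  exact h.trans (mul_le_mul_of_nonneg_right (le_abs_self k) hσ'.le)

lemma gaussianPDFReal_le_inv_mul {k : ℝ} (hk : 0 ≤ k) (h : k * σ ≤ |x - μ|) :
    gaussianPDFReal μ (σ ^ 2) x ≤ σ⁻¹ * gaussianPDFReal 0 1 k := by
  rcases eq_or_ne σ 0 with rfl | hσ
  · simp
  have hσ' : (0 : ℝ) < σ := by positivity
  rw [gaussianPDFReal_sq_eq]
  gcongr
  apply gaussianPDFReal_le_of_abs_sub_le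
  rwa [sub_zero, sub_zero, abs_div, NNReal.abs_eq, le_div_iff₀ hσ', abs_of_nonneg hk]

lemma ofReal_mul_volume_le_gaussianReal {s : Set ℝ} {c : ℝ} (hv : v ≠ 0)
    (h : ∀ x ∈ s, c ≤ gaussianPDFReal μ v x) :
    ENNReal.ofReal c * volume s ≤ gaussianReal μ v s := by
  rw [gaussianReal_apply μ hv, ← setLIntegral_const]
  exact setLIntegral_mono (measurable_gaussianPDF μ v)
    fun x hx ↦ ENNReal.ofReal_le_ofReal (h x hx)

lemma gaussianReal_le_ofReal_mul_volume {s : Set ℝ} {c : ℝ} (hv : v ≠ 0)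
    (h : ∀ x ∈ s, gaussianPDFReal μ v x ≤ c) :
    gaussianReal μ v s ≤ ENNReal.ofReal c * volume s := by
  rw [gaussianReal_apply μ hv, ← setLIntegral_const]
  exact setLIntegral_mono measurable_const fun x hx ↦ ENNReal.ofReal_le_ofReal (h x hx)

lemma le_cond_apply {Ω : Type*} [MeasurableSpace Ω] {μ : Measure Ω}
    [IsProbabilityMeasure μ] {s t : Set Ω} (hs : MeasurableSet s) (hts : t ⊆ s) :
    μ t ≤ μ[|s] t := by
  rw [cond_apply hs, inter_eq_self_of_subset_right hts]
  exact le_mul_of_one_le_left zero_le (ENNReal.one_le_inv.mpr prob_le_one)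

lemma cond_apply_le_ofReal_div {Ω : Type*} [MeasurableSpace Ω]
    {μ : Measure Ω} {s t : Set Ω} {a b : ℝ} (hs : MeasurableSet s) (ha : 0 < a)
    (has : ENNReal.ofReal a ≤ μ s) (htb : μ t ≤ ENNReal.ofReal b) :
    μ[|s] t ≤ ENNReal.ofReal (b / a) := by
  rw [cond_apply hs, ENNReal.ofReal_div_of_pos ha, ENNReal.div_eq_inv_mul]
  exact mul_le_mul' (ENNReal.inv_le_inv' has) ((measure_mono inter_subset_right).trans htb)

end ProbabilityTheory

lemma div_add_le_div_add {a b p q : ℝ} (ha : 0 < a) (hap : a ≤ p)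
    (hq : 0 ≤ q) (hqb : q ≤ b) : a / (a + b) ≤ p / (p + q) := by
  rw [div_le_div_iff₀ (by linarith) (by linarith)]
  nlinarith

lemma ENNReal.ofReal_div_add_le_div_add {a b : ℝ} {p q : ℝ≥0∞} (ha : 0 < a) (hb : 0 ≤ b)
    (hap : ENNReal.ofReal a ≤ p) (hp : p ≠ ∞) (hqb : q ≤ ENNReal.ofReal b) :
    ENNReal.ofReal (a / (a + b)) ≤ p / (p + q) := by
  have hq : q ≠ ∞ := ne_top_of_le_ne_top ofReal_ne_top hqb
  have hap' : a ≤ p.toReal := (ofReal_le_iff_le_toReal hp).mp hap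
  rw [← ofReal_toReal hp, ← ofReal_toReal hq, ← ofReal_add toReal_nonneg toReal_nonneg,
    ← ofReal_div_of_pos (by linarith [toReal_nonneg (a := q)])]
  exact ofReal_le_ofReal <| div_add_le_div_add ha hap' toReal_nonneg (toReal_le_of_le_ofReal hb hqb)

lemma six_div_twentyFive_le_gaussianPDFReal_one : 6 / 25 ≤ gaussianPDFReal 0 1 1 := by
  have hsqrt : √(2 * π) ≤ 2.5067 :=
    (Real.sqrt_le_left (by norm_num)).mpr (by nlinarith [pi_lt_d6])
  have hexp : exp (1 / 2) ≤ 1.6488 := by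
    have hsq : exp (1 / 2) ^ 2 = exp 1 := by rw [← exp_nat_mul]; norm_num
    nlinarith [exp_pos (1 / 2), exp_one_lt_d9]
  have hprod : √(2 * π) * exp (1 / 2) ≤ 25 / 6 :=
    (mul_le_mul hsqrt hexp (exp_pos _).le (by norm_num)).trans (by norm_num)
  have hpos : 0 < √(2 * π) * exp (1 / 2) := by positivity
  calc (6 / 25 : ℝ) ≤ (√(2 * π) * exp (1 / 2))⁻¹ := by
        rw [le_inv_comm₀ (by norm_num) hpos]; linarith
    _ = gaussianPDFReal 0 1 1 := by
        rw [gaussianPDFReal, mul_inv, ← exp_neg]; norm_num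

lemma gaussianPDFReal_twenty_div_nine_le : gaussianPDFReal 0 1 (20 / 9) ≤ 1 / 25 := by
  have hsqrt : 5 / 2 ≤ √(2 * π) := (Real.le_sqrt' (by norm_num)).mpr (by nlinarith [pi_gt_d2])
  have hexp : 10 ≤ exp (200 / 81) := by
    have hsplit : exp (200 / 81) = exp 1 ^ 2 * exp (38 / 81) := by
      rw [← exp_nat_mul, ← exp_add]; norm_num
    rw [hsplit]
    nlinarith [exp_one_gt_d9, add_one_le_exp (38 / 81 : ℝ)]
  have hprod : 25 ≤ √(2 * π) * exp (200 / 81) :=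
    (mul_le_mul hsqrt hexp (by norm_num) (by positivity)).trans' (by norm_num)
  calc gaussianPDFReal 0 1 (20 / 9) = (√(2 * π) * exp (200 / 81))⁻¹ := by
        rw [gaussianPDFReal, mul_inv, ← exp_neg]; norm_num
    _ ≤ 1 / 25 := by
        rw [one_div]; exact inv_anti₀ (by norm_num) hprod

lemma ofReal_le_gaussianReal_harvest_Ico :
    ENNReal.ofReal (12 / 25) ≤
      gaussianReal (2 / 25) ((1 / 20 : ℝ≥0) ^ 2) (Ico 0 (3 / 20)) := by
  have hpdf : ∀ x ∈ Icc (3 / 100 : ℝ) (13 / 100),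
      24 / 5 ≤ gaussianPDFReal (2 / 25) ((1 / 20 : ℝ≥0) ^ 2) x := by
    rintro x ⟨hx₁, hx₂⟩
    refine le_trans ?_ (inv_mul_gaussianPDFReal_le (k := 1) ?_)
    · norm_num; linarith [six_div_twentyFive_le_gaussianPDFReal_one]
    · rw [abs_le]; norm_num; constructor <;> linarith
  calc ENNReal.ofReal (12 / 25)
      = ENNReal.ofReal (24 / 5) * volume (Icc (3 / 100 : ℝ) (13 / 100)) := by
        rw [Real.volume_Icc, ← ENNReal.ofReal_mul (by norm_num)]; norm_num
    _ ≤ gaussianReal (2 / 25) ((1 / 20 : ℝ≥0) ^ 2) (Icc (3 / 100) (13 / 100)) :=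
        ofReal_mul_volume_le_gaussianReal (by norm_num) hpdf
    _ ≤ _ := measure_mono (Icc_subset_Ico (by norm_num) (by norm_num))

lemma ofReal_le_gaussianReal_derate_Icc :
    ENNReal.ofReal (12 / 25) ≤ gaussianReal (11 / 20) ((9 / 50 : ℝ≥0) ^ 2) (Icc 0 1) := by
  have hpdf : ∀ x ∈ Icc (37 / 100 : ℝ) (73 / 100),
      4 / 3 ≤ gaussianPDFReal (11 / 20) ((9 / 50 : ℝ≥0) ^ 2) x := by
    rintro x ⟨hx₁, hx₂⟩
    refine le_trans ?_ (inv_mul_gaussianPDFReal_le (k := 1) ?_)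
    · norm_num; linarith [six_div_twentyFive_le_gaussianPDFReal_one]
    · rw [abs_le]; norm_num; constructor <;> linarith
  calc ENNReal.ofReal (12 / 25)
      = ENNReal.ofReal (4 / 3) * volume (Icc (37 / 100 : ℝ) (73 / 100)) := by
        rw [Real.volume_Icc, ← ENNReal.ofReal_mul (by norm_num)]; norm_num
    _ ≤ gaussianReal (11 / 20) ((9 / 50 : ℝ≥0) ^ 2) (Icc (37 / 100) (73 / 100)) :=
        ofReal_mul_volume_le_gaussianReal (by norm_num) hpdf
    _ ≤ _ := measure_mono (Icc_subset_Icc (by norm_num) (by norm_num))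

lemma gaussianReal_derate_Ico_le :
    gaussianReal (11 / 20) ((9 / 50 : ℝ≥0) ^ 2) (Ico 0 (3 / 20)) ≤
      ENNReal.ofReal (1 / 30) := by
  have hpdf : ∀ x ∈ Ico (0 : ℝ) (3 / 20),
      gaussianPDFReal (11 / 20) ((9 / 50 : ℝ≥0) ^ 2) x ≤ 2 / 9 := by
    rintro x ⟨-, hx⟩
    refine (gaussianPDFReal_le_inv_mul (k := 20 / 9) (by norm_num) ?_).trans ?_
    · rw [abs_sub_comm, abs_of_pos (by linarith)]; norm_num; linarith
    · norm_num; linarith [gaussianPDFReal_twenty_div_nine_le]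
  calc gaussianReal (11 / 20) ((9 / 50 : ℝ≥0) ^ 2) (Ico 0 (3 / 20))
      ≤ ENNReal.ofReal (2 / 9) * volume (Ico (0 : ℝ) (3 / 20)) :=
        gaussianReal_le_ofReal_mul_volume (by norm_num) hpdf
    _ = ENNReal.ofReal (1 / 30) := by
        rw [Real.volume_Ico, ← ENNReal.ofReal_mul (by norm_num)]; norm_num

/-- With equal priors `1/2` on `L_harvest` and `L_derate`, the
posterior probability of `L_harvest` given `{δ_throttle < 0.15}` is at least
`0.85`:
`P_h([0, 0.15)) / (P_h([0, 0.15)) + P_d([0, 0.15))) ≥ 0.85`. -/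
theorem posterior_harvest_given_low_throttle :
    (85 : ℝ≥0∞) / 100 ≤
      Pharvest (Ico (0:ℝ) (3/20)) /
        (Pharvest (Ico (0:ℝ) (3/20)) + Pderate (Ico (0:ℝ) (3/20))) := by
  have hharvest : ENNReal.ofReal (12 / 25) ≤ Pharvest (Ico 0 (3 / 20)) :=
    ofReal_le_gaussianReal_harvest_Ico.trans <| le_cond_apply measurableSet_Icc <|
      Ico_subset_Icc_self.trans (Icc_subset_Icc le_rfl (by norm_num))
  have hderate : Pderate (Ico 0 (3 / 20)) ≤ ENNReal.ofReal ((1 / 30) / (12 / 25)) :=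
    cond_apply_le_ofReal_div measurableSet_Icc (by norm_num) ofReal_le_gaussianReal_derate_Icc
      gaussianReal_derate_Ico_le
  calc (85 : ℝ≥0∞) / 100 = ENNReal.ofReal (85 / 100) := by
        rw [ENNReal.ofReal_div_of_pos (by norm_num)]; norm_num
    _ ≤ ENNReal.ofReal ((12 / 25) / (12 / 25 + (1 / 30) / (12 / 25))) :=
        ENNReal.ofReal_le_ofReal (by norm_num)
    _ ≤ _ := ENNReal.ofReal_div_add_le_div_add (by norm_num) (by norm_num) hharvest
        (by unfold Pharvest; exact measure_ne_top _ _) hderate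
end
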